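/- For every prime power q and positive integers t, k there is an integer HJ_q(t,k) such that any k-colouring of the points of the affine geometry AG(HJ_q(t,k)−1, q) admits a monochromatic rank-t flat. -/

import Mathlib

/-!
Identify the points of `AG(n, q)` with `F^n`. By the extended Hales–Jewett theorem, for `n`
large every `k`-colouring of `F^n` has a monochromatic combinatorial subspace of dimension
`t - 1`. Such a subspace is the image of an injective affine map `F^(t-1) → F^n`, so the images
of an affine basis of `F^(t-1)` form an independent set of `t` points whose closure, a flat of
rank `t`, lies in the monochromatic subspace.
-/

open Matroid Set

namespace SGK

variable {α : Type*}

/-- The rank of a set `X` in a matroid `M`, as a value in `ℕ∞`. -/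
noncomputable def rk (M : Matroid α) (X : Set α) : ℕ∞ :=
  sSup {n : ℕ∞ | ∃ I, M.Indep I ∧ I ⊆ X ∧ I.encard = n}

/-- The rank of a matroid. -/
noncomputable def Rank (M : Matroid α) : ℕ∞ := rk M M.E

/-- A matroid is simple if it has no loops and no parallel pairs,
equivalently every set of at most two ground elements is independent. -/
def Simple (M : Matroid α) : Prop := ∀ e ∈ M.E, ∀ f ∈ M.E, M.Indep {e, f}

/-- `M` is representable over the field `F`: there is a map from the ground set to a
finite-dimensional `F`-vector space whose linear independence structure matches `M`. -/
def IsRep (F : Type*) [Field F] (M : Matroid α) : Prop :=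
  ∃ (n : ℕ) (v : α → (Fin n → F)),
    ∀ I ⊆ M.E, (M.Indep I ↔ LinearIndependent F (I.restrict v))

/-- The points (rank-1 flats) of `M` contained in the set `X`. -/
def points (M : Matroid α) (X : Set α) : Set (Set α) :=
  {P | M.IsFlat P ∧ P ⊆ X ∧ rk M P = 1}

/-- A line of `M` is a rank-2 flat. -/
def IsLine (M : Matroid α) (L : Set α) : Prop := M.IsFlat L ∧ rk M L = 2

/-- A circuit is a minimal dependent set. -/
def Circuit (M : Matroid α) (C : Set α) : Prop := Minimal M.Dep C

/-- A coloop is an element contained in every base. -/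
def Coloop (M : Matroid α) (e : α) : Prop := ∀ B, M.IsBase B → e ∈ B

/-- Contraction of the set `C`, defined by duality: `M ／ C = (M✶ ＼ C)✶`. -/
def con (M : Matroid α) (C : Set α) : Matroid α := (M✶ ↾ (M.E \ C))✶

/-- A matroid is connected if it is nonempty and cannot be written as the direct
sum of two nonempty matroids. -/
def Connected (M : Matroid α) : Prop :=
  M.E.Nonempty ∧ ¬ ∃ A B : Set α, A ∪ B = M.E ∧ Disjoint A B ∧ A.Nonempty ∧ B.Nonempty ∧
    ∀ I ⊆ M.E, M.Indep (I ∩ A) → M.Indep (I ∩ B) → M.Indep I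

/-- `M` is isomorphic to the affine geometry `AG(d, F)` (of rank `d + 1`): its ground
set is in bijection with the affine space `F^d` in a way matching affine independence. -/
def IsAG (F : Type*) [Field F] (d : ℕ) (M : Matroid α) : Prop :=
  ∃ v : α → (Fin d → F),
    (∀ I ⊆ M.E, (M.Indep I ↔ AffineIndependent F (I.restrict v))) ∧
    Set.InjOn v M.E ∧
    (∀ w : Fin d → F, ∃ e ∈ M.E, v e = w)

/-- `M` is isomorphic to the projective geometry `PG(k-1, F)` (of rank `k`): its ground
set is in bijection with the set of one-dimensional subspaces of `F^k`, matching
linear independence. -/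
def IsPG (F : Type*) [Field F] (k : ℕ) (M : Matroid α) : Prop :=
  ∃ v : α → (Fin k → F),
    (∀ I ⊆ M.E, (M.Indep I ↔ LinearIndependent F (I.restrict v))) ∧
    (∀ e ∈ M.E, v e ≠ 0) ∧
    (∀ e ∈ M.E, ∀ f ∈ M.E,
      Submodule.span F {v e} = Submodule.span F {v f} → e = f) ∧
    (∀ w : Fin k → F, w ≠ 0 → ∃ e ∈ M.E, Submodule.span F {w} = Submodule.span F {v e})

end SGK

namespace SGK

lemma rk_eq_eRk {α : Type*} (M : Matroid α) (X : Set α) : rk M X = M.eRk X := by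
  refine le_antisymm (sSup_le ?_) ?_
  · rintro _ ⟨I, hI, hIX, rfl⟩
    exact hI.encard_le_eRk_of_subset hIX
  · obtain ⟨I, hI⟩ := M.exists_isBasis' X
    exact le_sSup ⟨I, hI.indep, hI.subset, hI.encard_eq_eRk⟩

end SGK

namespace Matroid

variable {α ι F V : Type*} [Field F] [AddCommGroup V] [Module F V]

variable (F) in
def IsAffineRep (M : Matroid α) (v : α → V) : Prop :=
  ∀ I ⊆ M.E, M.Indep I ↔ AffineIndependent F (I.domRestrict v)

variable {M : Matroid α} {v : α → V}

lemma IsAffineRep.indep_range (hv : M.IsAffineRep F v) {f : ι → α} (hfE : ∀ i, f i ∈ M.E)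
    (hf : AffineIndependent F (v ∘ f)) : M.Indep (range f) := by
  refine (hv _ (range_subset_iff.2 hfE)).2 ?_
  rw [← affineIndependent_equiv (Equiv.ofInjective f (hf.injective.of_comp))]
  exact hf

lemma IsAffineRep.mem_affineSpan_of_mem_closure (hv : M.IsAffineRep F v) {J : Set α}
    (hJ : M.Indep J) {x : α} (hx : x ∈ M.closure J) : v x ∈ affineSpan F (v '' J) := by
  by_cases hxJ : x ∈ J
  · exact subset_affineSpan F _ (mem_image_of_mem v hxJ)
  by_contra hxs
  rw [hJ.mem_closure_iff'] at hx
  refine hxJ (hx.2 ((hv _ (insert_subset hx.1 hJ.subset_ground)).2 ?_))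
  set x' : ↥(insert x J) := ⟨x, mem_insert x J⟩
  have hmemJ : ∀ y : {y : ↥(insert x J) // y ≠ x'}, y.1.1 ∈ J := fun y =>
    y.1.2.resolve_left fun h => y.2 (Subtype.ext h)
  refine AffineIndependent.affineIndependent_of_notMem_span (i := x') ?_ ?_
  · let g : {y : ↥(insert x J) // y ≠ x'} ↪ J :=
      ⟨fun y => ⟨y.1.1, hmemJ y⟩, fun y z h => by simpa [Subtype.ext_iff] using h⟩
    exact ((hv J hJ.subset_ground).1 hJ).comp_embedding g
  · refine fun h => hxs (affineSpan_mono F ?_ h)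
    rintro _ ⟨y, hy, rfl⟩
    exact ⟨y.1, hmemJ ⟨y, hy⟩, rfl⟩

end Matroid

namespace Combinatorics.Subspace

variable {η ι R : Type*}

lemma injective (l : Subspace η R ι) : Function.Injective l := by
  intro x y hxy
  funext e
  obtain ⟨i, hi⟩ := l.proper e
  simpa [apply_inr hi] using congrFun hxy i

variable [Ring R]

def toAffineMap (l : Subspace η R ι) : (η → R) →ᵃ[R] (ι → R) where
  toFun := l
  linear := LinearMap.pi fun i => (l.idxFun i).elim (fun _ => 0) LinearMap.proj
  map_vadd' x y := by
    funext i
    cases h : l.idxFun i with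
    | inl a => simp [apply_inl h, h]
    | inr e => simp [apply_inr h, h]

end Combinatorics.Subspace

lemma AffineBasis.coe_affineSpan_range_comp {ι k V P V₂ P₂ : Type*} [Ring k] [AddCommGroup V]
    [Module k V] [AddTorsor V P] [AddCommGroup V₂] [Module k V₂] [AddTorsor V₂ P₂]
    (b : AffineBasis ι k P) (f : P →ᵃ[k] P₂) :
    (affineSpan k (range (f ∘ b)) : Set P₂) = range f := by
  rw [range_comp, ← AffineSubspace.map_span, b.tot, AffineSubspace.coe_map,
    AffineSubspace.top_coe, image_univ]

theorem stmt_9_general (F : Type) [Field F] [Fintype F] (t k : ℕ) (ht : 1 ≤ t) :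
    ∃ N : ℕ, 1 ≤ N ∧ ∀ (α : Type) (M : Matroid α), SGK.IsAG F (N - 1) M →
      ∀ c : α → Fin k, ∃ Fl, M.IsFlat Fl ∧ SGK.rk M Fl = (t : ℕ∞) ∧
        ∃ i, ∀ x ∈ Fl, c x = i := by
  obtain ⟨m, rfl⟩ : ∃ m, t = m + 1 := ⟨t - 1, by omega⟩
  obtain ⟨n, hn⟩ := Combinatorics.Subspace.exists_mono_in_high_dimension_fin F (Fin k) (Fin m)
  refine ⟨n + 1, by omega, fun α M hAG c => ?_⟩
  obtain ⟨v, hv, hvinj, hvsurj⟩ := hAG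
  replace hv : M.IsAffineRep F v := hv
  choose rep hrepE hrep using hvsurj
  obtain ⟨l, i, hmono⟩ := hn (c ∘ rep)
  obtain ⟨b⟩ : Nonempty (AffineBasis (Fin (m + 1)) F (Fin m → F)) :=
    AffineBasis.exists_affineBasis_of_finiteDimensional (by simp)
  set A := l.toAffineMap
  set p := rep ∘ A ∘ b
  have hvp : v ∘ p = A ∘ b := funext fun j => hrep _
  have hp_ai : AffineIndependent F (v ∘ p) := by
    rw [hvp]
    exact (A.affineIndependent_iff l.injective).2 b.ind
  have hp_indep : M.Indep (range p) := hv.indep_range (fun _ => hrepE _) hp_ai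
  refine ⟨M.closure (range p), M.isFlat_closure _, ?_, i, fun x hx => ?_⟩
  · rw [SGK.rk_eq_eRk, eRk_closure_eq, hp_indep.eRk_eq_encard, ← image_univ,
      hp_ai.injective.of_comp.encard_image, encard_univ]
    simp
  · have hxA := hv.mem_affineSpan_of_mem_closure hp_indep hx
    rw [← range_comp, hvp, ← SetLike.mem_coe, b.coe_affineSpan_range_comp] at hxA
    obtain ⟨y, hy⟩ := hxA
    obtain rfl : x = rep (l y) :=
      hvinj (M.closure_subset_ground _ hx) (hrepE _) (hy.symm.trans (hrep _).symm)
    exact hmono y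

/-- Geometric Hales–Jewett theorem: for every finite field of order `q` (a prime power)
and positive integers `t`, `k`, there is `N` such that any `k`-colouring of the points of
`AG(N - 1, q)` admits a monochromatic rank-`t` flat. -/
theorem stmt_9 (F : Type) [Field F] [Fintype F] (t k : ℕ) (ht : 1 ≤ t) (hk : 1 ≤ k) :
    ∃ N : ℕ, 1 ≤ N ∧ ∀ (α : Type) (M : Matroid α), SGK.IsAG F (N - 1) M →
      ∀ c : α → Fin k, ∃ Fl, M.IsFlat Fl ∧ SGK.rk M Fl = (t : ℕ∞) ∧
        ∃ i, ∀ x ∈ Fl, c x = i :=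
  stmt_9_general F t k ht
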